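/- For all integers n ≥ 3 and d > n, the strict inequality π'(n,d) < π(n,d) holds. -/

import Mathlib

/-!
Termwise comparison: `c(n,h) ≥ h(n-1) + 1` for every `h`, so each summand of `π'` is at most the
corresponding summand of `π`, and for `n ≥ 3` the summand at `h = 2` is strictly smaller once
`d ≥ c(n,2)`. Below that threshold `π' = 0`, while `π` already has the positive summand `d - n`.
Both binomial bounds come from Pascal's rule by induction on both arguments.
-/

/-- `c(n,h) = C(n-1+h, h)`. -/
def c (n h : ℕ) : ℕ := (n - 1 + h).choose h

/-- Castelnuovo's bound `π(n,d) = Σ_{h≥1} (d - h(n-1) - 1)⁺` (finite truncation). -/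
def piC (n d : ℕ) : ℕ := ∑ h ∈ Finset.Icc 1 d, (d - (h * (n - 1) + 1))

/-- `π'(n,d)` (finite truncation of `Σ_{h≥1} (d - c(n,h))⁺`). -/
def piC' (n d : ℕ) : ℕ :=
  if d < c n 2 then 0 else ∑ h ∈ Finset.Icc 1 d, (d - c n h)

namespace Nat

theorem add_one_add_add_one_choose (a b : ℕ) :
    (a + 1 + (b + 1)).choose (a + 1) = (a + (b + 1)).choose a + (a + 1 + b).choose (a + 1) := by
  rw [show a + 1 + (b + 1) = a + (b + 1) + 1 by omega, choose_succ_succ,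
    show a + (b + 1) = a + 1 + b by omega]

theorem mul_add_one_le_add_choose : ∀ a b : ℕ, a * b + 1 ≤ (a + b).choose a
  | 0, _ => by simp
  | _ + 1, 0 => by simp
  | a + 1, b + 1 => by
    have h₁ := mul_add_one_le_add_choose a (b + 1)
    have h₂ := mul_add_one_le_add_choose (a + 1) b
    rw [add_one_add_add_one_choose]
    nlinarith

theorem mul_add_one_lt_add_choose {a b : ℕ} (ha : 2 ≤ a) (hb : 2 ≤ b) :
    a * b + 1 < (a + b).choose a := by
  obtain ⟨a, rfl⟩ := exists_add_of_le (one_le_of_lt ha)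
  obtain ⟨b, rfl⟩ := exists_add_of_le (one_le_of_lt hb)
  have h₁ := mul_add_one_le_add_choose a (b + 1)
  have h₂ := mul_add_one_le_add_choose (a + 1) b
  rw [add_comm 1 a, add_comm 1 b, add_one_add_add_one_choose]
  nlinarith

end Nat

theorem mul_add_one_le_c (n h : ℕ) : h * (n - 1) + 1 ≤ c n h := by
  rw [c, add_comm (n - 1)]
  exact Nat.mul_add_one_le_add_choose h (n - 1)

theorem mul_add_one_lt_c {n h : ℕ} (hn : 3 ≤ n) (hh : 2 ≤ h) : h * (n - 1) + 1 < c n h := by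
  rw [c, add_comm (n - 1)]
  exact Nat.mul_add_one_lt_add_choose hh (by omega)

theorem piC_pos {n d : ℕ} (hn : 1 ≤ n) (hd : n < d) : 0 < piC n d :=
  calc 0 < d - (1 * (n - 1) + 1) := by omega
    _ ≤ piC n d :=
      Finset.single_le_sum (f := fun h ↦ d - (h * (n - 1) + 1)) (fun _ _ ↦ Nat.zero_le _)
        (Finset.mem_Icc.2 ⟨le_rfl, by omega⟩)

theorem sum_sub_c_lt_piC {n d : ℕ} (hn : 3 ≤ n) (hd : c n 2 ≤ d) :
    ∑ h ∈ Finset.Icc 1 d, (d - c n h) < piC n d := by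
  have hc₂ := mul_add_one_lt_c hn le_rfl
  refine Finset.sum_lt_sum (fun h _ ↦ Nat.sub_le_sub_left (mul_add_one_le_c n h) d) ⟨2, ?_, ?_⟩
  · exact Finset.mem_Icc.2 ⟨by norm_num, by omega⟩
  · omega

/-- For `n ≥ 3` and `d > n`, the strict inequality `π'(n,d) < π(n,d)` holds. -/
theorem piC'_lt_piC (n d : ℕ) (hn : 3 ≤ n) (hd : n < d) : piC' n d < piC n d := by
  unfold piC'
  split_ifs with hsmall
  · exact piC_pos (by omega) hd
  · exact sum_sub_c_lt_piC hn (not_lt.1 hsmall)
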